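/- arXiv:2206.15018 — 2 statements merged into one kernel-verified Lean document; each statement's English description precedes it below -/
import Mathlib

section
/- Let M = [[F, H, E], [A, G, B], [C, K, D], [J, I, L]] be a real matrix of rank r where F, A, G, K, D, L are fixed (staircase pattern) and the remaining blocks are unknown. Then M is the unique rank-≤-r matrix with those fixed blocks if and only if rank(A) = rank(G) = rank(K) = rank(D) = r. -/
open Matrix

/-- A 3×3 block matrix. -/
def block3 {m1 m2 m3 n1 n2 n3 : ℕ}
    (A11 : Matrix (Fin m1) (Fin n1) ℝ) (A12 : Matrix (Fin m1) (Fin n2) ℝ)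
    (A13 : Matrix (Fin m1) (Fin n3) ℝ)
    (A21 : Matrix (Fin m2) (Fin n1) ℝ) (A22 : Matrix (Fin m2) (Fin n2) ℝ)
    (A23 : Matrix (Fin m2) (Fin n3) ℝ)
    (A31 : Matrix (Fin m3) (Fin n1) ℝ) (A32 : Matrix (Fin m3) (Fin n2) ℝ)
    (A33 : Matrix (Fin m3) (Fin n3) ℝ) :
    Matrix ((Fin m1 ⊕ Fin m2) ⊕ Fin m3) ((Fin n1 ⊕ Fin n2) ⊕ Fin n3) ℝ :=
  Matrix.fromBlocks (Matrix.fromBlocks A11 A12 A21 A22) (Matrix.fromRows A13 A23)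
    (Matrix.fromCols A31 A32) A33

/-- A 4×3 block matrix: a 3×3 block matrix stacked on a fourth block row. -/
def block43 {m1 m2 m3 m4 n1 n2 n3 : ℕ}
    (A11 : Matrix (Fin m1) (Fin n1) ℝ) (A12 : Matrix (Fin m1) (Fin n2) ℝ)
    (A13 : Matrix (Fin m1) (Fin n3) ℝ)
    (A21 : Matrix (Fin m2) (Fin n1) ℝ) (A22 : Matrix (Fin m2) (Fin n2) ℝ)
    (A23 : Matrix (Fin m2) (Fin n3) ℝ)
    (A31 : Matrix (Fin m3) (Fin n1) ℝ) (A32 : Matrix (Fin m3) (Fin n2) ℝ)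
    (A33 : Matrix (Fin m3) (Fin n3) ℝ)
    (A41 : Matrix (Fin m4) (Fin n1) ℝ) (A42 : Matrix (Fin m4) (Fin n2) ℝ)
    (A43 : Matrix (Fin m4) (Fin n3) ℝ) :
    Matrix (((Fin m1 ⊕ Fin m2) ⊕ Fin m3) ⊕ Fin m4) ((Fin n1 ⊕ Fin n2) ⊕ Fin n3) ℝ :=
  Matrix.fromRows (block3 A11 A12 A13 A21 A22 A23 A31 A32 A33)
    (Matrix.fromCols (Matrix.fromCols A41 A42) A43)

/-!
Factor `M = P Q` through `ℝ^r`, with block rows `Pᵢ` and block columns `Qⱼ`, so that block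
`(i, j)` of `M` is `Pᵢ Qⱼ`.

If `A, G, K, D` have rank `r`, each unknown block is the fourth corner of a `2 × 2` window whose
other three blocks are known and whose diagonally opposite block has rank `r`. In a matrix of rank
`r` such a window `[[F, H], [A, G]]` has `F = Y A`, `G = A X` and `H = Y G = F X`, so `H` is
pinned down and the completion is unique.

Conversely, every refactorization that reproduces the six staircase blocks yields a completion
of rank `≤ r`. If `uᵀ Q₁ = 0`, adding `x uᵀ` to `P₁` only moves `H` and `E`; the last block row
is symmetric. If `P₂ v = 0`, the shear `T = 1 + v vᵀ` fixes `P₂`, so `P₁ ↦ P₁ T`, `Q₁ ↦ T⁻¹ Q₁`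
keeps the staircase and moves `H, E, C, J` unless `P v = 0`; shears handle `P₃` and `Q₂` in the
same way. Uniqueness therefore makes `P₂, P₃` injective and `Q₁, Q₂, Q₃` of full row rank, which
gives the four rank equalities.
-/

namespace Matrix

section Rank

variable {K : Type*} [Field K] {m n o : Type*}

theorem rank_eq_card_width_iff [Fintype n] {X : Matrix m n K} :
    X.rank = Fintype.card n ↔ ∀ v, X *ᵥ v = 0 → v = 0 := by
  have := LinearMap.finrank_range_add_finrank_ker X.mulVecLin
  rw [Module.finrank_pi] at this
  have hker : (∀ v, X *ᵥ v = 0 → v = 0) ↔ LinearMap.ker X.mulVecLin = ⊥ :=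
    (LinearMap.ker_eq_bot' (f := X.mulVecLin)).symm
  rw [hker, rank, ← Submodule.finrank_eq_zero]
  omega

theorem rank_mul_eq_right_of_mulVec_injective [Fintype n] [Fintype o] {X : Matrix m n K}
    (hX : ∀ v, X *ᵥ v = 0 → v = 0) (Y : Matrix n o K) : (X * Y).rank = Y.rank := by
  rw [rank, rank, mulVecLin_mul, LinearMap.range_comp,
    ← (Submodule.equivMapOfInjective X.mulVecLin
      ((injective_iff_map_eq_zero _).2 hX) _).finrank_eq]

theorem rank_mul_eq_card [Fintype n] [Fintype o] {X : Matrix m n K} {Y : Matrix n o K}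
    (hX : ∀ v, X *ᵥ v = 0 → v = 0) (hY : ∀ u, u ᵥ* Y = 0 → u = 0) :
    (X * Y).rank = Fintype.card n := by
  rw [rank_mul_eq_right_of_mulVec_injective hX, ← rank_transpose, rank_eq_card_width_iff]
  simpa only [mulVec_transpose] using hY

theorem exists_eq_mul_of_rank_eq [Fintype n] {M : Matrix m n K} {r : ℕ} (hM : M.rank = r) :
    ∃ (P : Matrix m (Fin r) K) (Q : Matrix (Fin r) n K), M = P * Q ∧
      (∀ v, P *ᵥ v = 0 → v = 0) ∧ (∀ u, u ᵥ* Q = 0 → u = 0) := by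
  classical
  let e : LinearMap.range M.mulVecLin ≃ₗ[K] (Fin r → K) :=
    LinearEquiv.ofFinrankEq _ _ (by rw [Module.finrank_fin_fun]; exact hM)
  obtain ⟨P, Q, rfl⟩ : ∃ (P : Matrix m (Fin r) K) (Q : Matrix (Fin r) n K), M = P * Q := by
    refine ⟨LinearMap.toMatrix' ((LinearMap.range M.mulVecLin).subtype ∘ₗ e.symm.toLinearMap),
      LinearMap.toMatrix' (e.toLinearMap ∘ₗ M.mulVecLin.rangeRestrict), ?_⟩
    rw [← LinearMap.toMatrix'_comp, LinearMap.comp_assoc,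
      ← LinearMap.comp_assoc _ e.toLinearMap, LinearEquiv.symm_comp, LinearMap.id_comp,
      LinearMap.rangeRestrict, LinearMap.subtype_comp_codRestrict, ← Matrix.toLin'_apply',
      LinearMap.toMatrix'_toLin']
  refine ⟨P, Q, rfl, rank_eq_card_width_iff.1 ?_,
    fun u hu => (rank_eq_card_width_iff (X := Qᵀ)).1 ?_ u (by rwa [mulVec_transpose])⟩
  · refine le_antisymm (rank_le_card_width P) ?_
    rw [Fintype.card_fin]
    exact hM.ge.trans (rank_mul_le_left P Q)
  · rw [rank_transpose]
    refine le_antisymm (rank_le_card_height Q) ?_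
    rw [Fintype.card_fin]
    exact hM.ge.trans (rank_mul_le_right P Q)

theorem range_mulVecLin_fromCols [Fintype n] [Fintype o] (U : Matrix m n K) (V : Matrix m o K) :
    LinearMap.range (fromCols U V).mulVecLin =
      LinearMap.range U.mulVecLin ⊔ LinearMap.range V.mulVecLin := by
  apply le_antisymm
  · rintro _ ⟨w, rfl⟩
    rw [mulVecLin_apply, fromCols_mulVec]
    exact Submodule.add_mem_sup ⟨_, rfl⟩ ⟨_, rfl⟩
  · refine sup_le ?_ ?_ <;> rintro _ ⟨w, rfl⟩
    · exact ⟨Sum.elim w 0, by simp⟩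
    · exact ⟨Sum.elim 0 w, by simp⟩

theorem range_mulVecLin_le_of_rank_fromCols_le [Fintype n] [Fintype o]
    {U : Matrix m n K} {V : Matrix m o K} (h : (fromCols U V).rank ≤ U.rank) :
    LinearMap.range V.mulVecLin ≤ LinearMap.range U.mulVecLin := by
  rw [rank, rank, range_mulVecLin_fromCols] at h
  rw [Submodule.eq_of_le_of_finrank_le le_sup_left h]
  exact le_sup_right

theorem rank_fromCols_comm [Fintype n] [Fintype o] (U : Matrix m n K) (V : Matrix m o K) :
    (fromCols U V).rank = (fromCols V U).rank := by
  rw [rank, rank, range_mulVecLin_fromCols, range_mulVecLin_fromCols, sup_comm]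

theorem exists_eq_mul_of_range_mulVecLin_le [Fintype n] [Fintype o] [DecidableEq o]
    {U : Matrix m n K} {V : Matrix m o K}
    (h : LinearMap.range V.mulVecLin ≤ LinearMap.range U.mulVecLin) :
    ∃ X : Matrix n o K, V = U * X := by
  choose x hx using fun j => h ⟨Pi.single j 1, rfl⟩
  refine ⟨(of x)ᵀ, ?_⟩
  ext i j
  have := congrFun (hx j) i
  simp only [mulVecLin_apply, mulVec_single_one, col_apply] at this
  rw [← this, mulVec, mul_apply, dotProduct]
  rfl

theorem fromBlocks_topRight_eq_of_rank_le {m₁ m₂ n₁ n₂ : Type*} [Fintype m₁] [Fintype m₂]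
    [Fintype n₁] [Fintype n₂] [DecidableEq m₁] [DecidableEq n₂]
    {F : Matrix m₁ n₁ K} {H H' : Matrix m₁ n₂ K} {A : Matrix m₂ n₁ K}
    {G : Matrix m₂ n₂ K} (h : (fromBlocks F H A G).rank ≤ A.rank)
    (h' : (fromBlocks F H' A G).rank ≤ A.rank) : H = H' := by
  obtain ⟨X, hX⟩ : ∃ X : Matrix n₁ n₂ K, fromRows H' G = fromRows F A * X := by
    refine exists_eq_mul_of_range_mulVecLin_le (range_mulVecLin_le_of_rank_fromCols_le ?_)
    rw [fromCols_fromRows_eq_fromBlocks]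
    exact h'.trans (rank_submatrix_le (fromRows F A) Sum.inr id)
  obtain ⟨Y, hY⟩ : ∃ Y : Matrix m₂ m₁ K, fromRows Fᵀ Hᵀ = fromRows Aᵀ Gᵀ * Y := by
    refine exists_eq_mul_of_range_mulVecLin_le (range_mulVecLin_le_of_rank_fromCols_le ?_)
    rw [← rank_fromCols_comm, fromCols_fromRows_eq_fromBlocks, ← fromBlocks_transpose,
      rank_transpose]
    exact h.trans ((rank_transpose A).ge.trans (rank_submatrix_le (fromRows Aᵀ Gᵀ) Sum.inl id))
  rw [fromRows_mul, fromRows_ext_iff] at hX hY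
  calc H = Yᵀ * G := by rw [← transpose_transpose H, hY.2, transpose_mul, transpose_transpose]
    _ = (Yᵀ * A) * X := by rw [hX.2, Matrix.mul_assoc]
    _ = H' := by rw [← transpose_transpose A, ← transpose_mul, ← hY.1, transpose_transpose, hX.1]

theorem submatrix_eq_of_rank_le_rank_submatrix {ι κ m₁ m₂ n₁ n₂ : Type*} [Fintype κ]
    [Fintype m₁] [Fintype m₂] [Fintype n₁] [Fintype n₂] [DecidableEq m₁] [DecidableEq n₂]
    {M M' : Matrix ι κ K} (r₁ : m₁ → ι) (r₂ : m₂ → ι) (c₁ : n₁ → κ) (c₂ : n₂ → κ)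
    (hM : M.rank ≤ (M.submatrix r₂ c₁).rank) (hM' : M'.rank ≤ (M'.submatrix r₂ c₁).rank)
    (h₁₁ : M.submatrix r₁ c₁ = M'.submatrix r₁ c₁) (h₂₁ : M.submatrix r₂ c₁ = M'.submatrix r₂ c₁)
    (h₂₂ : M.submatrix r₂ c₂ = M'.submatrix r₂ c₂) :
    M.submatrix r₁ c₂ = M'.submatrix r₁ c₂ := by
  have hwindow (N : Matrix ι κ K) : (fromBlocks (N.submatrix r₁ c₁) (N.submatrix r₁ c₂)
      (N.submatrix r₂ c₁) (N.submatrix r₂ c₂)).rank ≤ N.rank := by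
    convert rank_submatrix_le N (Sum.elim r₁ r₂) (Sum.elim c₁ c₂)
    ext (i | i) (j | j) <;> rfl
  have hw := (hwindow M).trans hM
  rw [h₁₁, h₂₁, h₂₂] at hw
  exact fromBlocks_topRight_eq_of_rank_le hw ((hwindow M').trans hM')

end Rank

section Shear

variable {K : Type*} [Field K] {ι κ ρ : Type*}

theorem vecMulVec_eq_zero_iff {x : ι → K} {y : κ → K} : vecMulVec x y = 0 ↔ x = 0 ∨ y = 0 := by
  simp only [← ext_iff, vecMulVec_apply, zero_apply, mul_eq_zero, funext_iff, Pi.zero_apply,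
    forall_or_left, forall_or_right]

variable [DecidableEq ρ]

def shear (a : K) (v : ρ → K) : Matrix ρ ρ K := 1 + a • vecMulVec v v

theorem shear_zero (v : ρ → K) : shear 0 v = 1 := by
  simp [shear]

variable [Fintype ρ]

theorem shear_mul_shear (a b : K) (v : ρ → K) :
    shear a v * shear b v = shear (a + b + a * b * (v ⬝ᵥ v)) v := by
  simp only [shear, Matrix.add_mul, Matrix.mul_add, Matrix.one_mul, Matrix.mul_one,
    Matrix.smul_mul, Matrix.mul_smul, vecMulVec_mul_vecMulVec, vecMulVec_smul, smul_smul,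
    add_smul]
  module

theorem mul_shear_of_mulVec_eq_zero {X : Matrix ι ρ K} {v : ρ → K} (h : X *ᵥ v = 0) (a : K) :
    X * shear a v = X := by
  rw [shear, Matrix.mul_add, Matrix.mul_one, Matrix.mul_smul, mul_vecMulVec, h, zero_vecMulVec,
    smul_zero, add_zero]

theorem shear_mul_of_vecMul_eq_zero {Y : Matrix ρ κ K} {v : ρ → K} (h : v ᵥ* Y = 0) (a : K) :
    shear a v * Y = Y := by
  rw [shear, Matrix.add_mul, Matrix.one_mul, Matrix.smul_mul, vecMulVec_mul, h,
    vecMulVec_eq_zero_iff.2 (Or.inr rfl), smul_zero, add_zero]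

theorem mul_shear_mul (X : Matrix ι ρ K) (a : K) (v : ρ → K) (Y : Matrix ρ κ K) :
    X * shear a v * Y = X * Y + a • vecMulVec (X *ᵥ v) (v ᵥ* Y) := by
  rw [shear, Matrix.mul_add, Matrix.mul_one, Matrix.add_mul, Matrix.mul_smul, Matrix.smul_mul,
    mul_vecMulVec, vecMulVec_mul]

theorem mulVec_eq_zero_of_mul_shear_mul_eq {X : Matrix ι ρ K} {Y : Matrix ρ κ K} {a : K}
    {v : ρ → K} (ha : a ≠ 0) (hY : v ᵥ* Y ≠ 0) (h : X * shear a v * Y = X * Y) :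
    X *ᵥ v = 0 := by
  rw [mul_shear_mul, add_eq_left, smul_eq_zero, vecMulVec_eq_zero_iff] at h
  tauto

theorem exists_shear_mul_shear_eq_one [LinearOrder K] [IsStrictOrderedRing K] (v : ρ → K) :
    ∃ b ≠ 0, shear 1 v * shear b v = 1 ∧ shear b v * shear 1 v = 1 := by
  have hpos : 0 < 1 + v ⬝ᵥ v :=
    add_pos_of_pos_of_nonneg one_pos (Finset.sum_nonneg fun i _ => mul_self_nonneg (v i))
  refine ⟨-(1 + v ⬝ᵥ v)⁻¹, by simp [hpos.ne'], ?_, ?_⟩ <;>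
    rw [shear_mul_shear, ← shear_zero v] <;> congr 1 <;> field_simp <;> ring

end Shear

end Matrix

section Staircase

variable {K : Type*} [Field K] {ι₁ ι₂ ι₃ ι₄ κ₁ κ₂ κ₃ ρ : Type*} [Fintype ρ]

def IsStaircaseRigid (P₁ : Matrix ι₁ ρ K) (P₂ : Matrix ι₂ ρ K) (P₃ : Matrix ι₃ ρ K)
    (P₄ : Matrix ι₄ ρ K) (Q₁ : Matrix ρ κ₁ K) (Q₂ : Matrix ρ κ₂ K) (Q₃ : Matrix ρ κ₃ K) : Prop :=
  ∀ (P₁' : Matrix ι₁ ρ K) (P₂' : Matrix ι₂ ρ K) (P₃' : Matrix ι₃ ρ K) (P₄' : Matrix ι₄ ρ K)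
    (Q₁' : Matrix ρ κ₁ K) (Q₂' : Matrix ρ κ₂ K) (Q₃' : Matrix ρ κ₃ K),
    P₁' * Q₁' = P₁ * Q₁ → P₂' * Q₁' = P₂ * Q₁ → P₂' * Q₂' = P₂ * Q₂ →
    P₃' * Q₂' = P₃ * Q₂ → P₃' * Q₃' = P₃ * Q₃ → P₄' * Q₃' = P₄ * Q₃ →
    P₁' * Q₂' = P₁ * Q₂ ∧ P₁' * Q₃' = P₁ * Q₃ ∧ P₂' * Q₃' = P₂ * Q₃ ∧
    P₃' * Q₁' = P₃ * Q₁ ∧ P₄' * Q₁' = P₄ * Q₁ ∧ P₄' * Q₂' = P₄ * Q₂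

namespace IsStaircaseRigid

variable {P₁ : Matrix ι₁ ρ K} {P₂ : Matrix ι₂ ρ K} {P₃ : Matrix ι₃ ρ K} {P₄ : Matrix ι₄ ρ K}
  {Q₁ : Matrix ρ κ₁ K} {Q₂ : Matrix ρ κ₂ K} {Q₃ : Matrix ρ κ₃ K}

theorem reverse (h : IsStaircaseRigid P₁ P₂ P₃ P₄ Q₁ Q₂ Q₃) :
    IsStaircaseRigid P₄ P₃ P₂ P₁ Q₃ Q₂ Q₁ := by
  intro P₄' P₃' P₂' P₁' Q₃' Q₂' Q₁' h₄₃ h₃₃ h₃₂ h₂₂ h₂₁ h₁₁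
  obtain ⟨h₁₂, h₁₃, h₂₃, h₃₁, h₄₁, h₄₂⟩ := h P₁' P₂' P₃' P₄' Q₁' Q₂' Q₃' h₁₁ h₂₁ h₂₂ h₃₂ h₃₃ h₄₃
  exact ⟨h₄₂, h₄₁, h₃₁, h₂₃, h₁₃, h₁₂⟩

theorem eq_zero_of_vecMul_first_eq_zero (h : IsStaircaseRigid P₁ P₂ P₃ P₄ Q₁ Q₂ Q₃)
    [Nonempty ι₁] (hQ : ∀ u, u ᵥ* Q₁ = 0 → u ᵥ* Q₂ = 0 → u ᵥ* Q₃ = 0 → u = 0) :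
    ∀ u, u ᵥ* Q₁ = 0 → u = 0 := by
  intro u hu
  obtain ⟨x, hx⟩ := exists_ne (0 : ι₁ → K)
  obtain ⟨h₁₂, h₁₃, -⟩ := h (P₁ + vecMulVec x u) P₂ P₃ P₄ Q₁ Q₂ Q₃
    (by rw [Matrix.add_mul, vecMulVec_mul, hu, vecMulVec_eq_zero_iff.2 (Or.inr rfl), add_zero])
    rfl rfl rfl rfl rfl
  rw [Matrix.add_mul, vecMulVec_mul, add_eq_left, vecMulVec_eq_zero_iff] at h₁₂ h₁₃
  exact hQ u hu (h₁₂.resolve_left hx) (h₁₃.resolve_left hx)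

variable [DecidableEq ρ] [LinearOrder K] [IsStrictOrderedRing K]

theorem eq_zero_of_mulVec_second_eq_zero (h : IsStaircaseRigid P₁ P₂ P₃ P₄ Q₁ Q₂ Q₃)
    (hP : ∀ v, P₁ *ᵥ v = 0 → P₂ *ᵥ v = 0 → P₃ *ᵥ v = 0 → P₄ *ᵥ v = 0 → v = 0)
    (hQ₁ : ∀ u, u ᵥ* Q₁ = 0 → u = 0) (hQ₃ : ∀ u, u ᵥ* Q₃ = 0 → u = 0) :
    ∀ v, P₂ *ᵥ v = 0 → v = 0 := by
  intro v hv
  by_contra hv₀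
  obtain ⟨b, hb, hTS, -⟩ := exists_shear_mul_shear_eq_one v
  obtain ⟨-, h₁₃, -, h₃₁, h₄₁, -⟩ := h (P₁ * shear 1 v) P₂ P₃ P₄ (shear b v * Q₁) Q₂ Q₃
    (by rw [Matrix.mul_assoc, ← Matrix.mul_assoc (shear 1 v), hTS, Matrix.one_mul])
    (by rw [← Matrix.mul_assoc, mul_shear_of_mulVec_eq_zero hv]) rfl rfl rfl rfl
  rw [← Matrix.mul_assoc] at h₃₁ h₄₁
  have hvQ₁ : v ᵥ* Q₁ ≠ 0 := fun h₀ => hv₀ (hQ₁ v h₀)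
  have hvQ₃ : v ᵥ* Q₃ ≠ 0 := fun h₀ => hv₀ (hQ₃ v h₀)
  exact hv₀ (hP v (mulVec_eq_zero_of_mul_shear_mul_eq one_ne_zero hvQ₃ h₁₃) hv
    (mulVec_eq_zero_of_mul_shear_mul_eq hb hvQ₁ h₃₁)
    (mulVec_eq_zero_of_mul_shear_mul_eq hb hvQ₁ h₄₁))

theorem eq_zero_of_vecMul_second_eq_zero (h : IsStaircaseRigid P₁ P₂ P₃ P₄ Q₁ Q₂ Q₃)
    (hP : ∀ v, P₁ *ᵥ v = 0 → P₂ *ᵥ v = 0 → P₃ *ᵥ v = 0 → P₄ *ᵥ v = 0 → v = 0)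
    (hQ₁ : ∀ u, u ᵥ* Q₁ = 0 → u = 0) (hQ₃ : ∀ u, u ᵥ* Q₃ = 0 → u = 0) :
    ∀ u, u ᵥ* Q₂ = 0 → u = 0 := by
  intro u hu
  by_contra hu₀
  obtain ⟨b, hb, -, hST⟩ := exists_shear_mul_shear_eq_one u
  obtain ⟨-, h₁₃, h₂₃, h₃₁, h₄₁, -⟩ := h P₁ P₂ (P₃ * shear b u) (P₄ * shear b u) Q₁ Q₂
    (shear 1 u * Q₃) rfl rfl rfl
    (by rw [Matrix.mul_assoc, shear_mul_of_vecMul_eq_zero hu])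
    (by rw [Matrix.mul_assoc, ← Matrix.mul_assoc (shear b u), hST, Matrix.one_mul])
    (by rw [Matrix.mul_assoc, ← Matrix.mul_assoc (shear b u), hST, Matrix.one_mul])
  rw [← Matrix.mul_assoc] at h₁₃ h₂₃
  have huQ₁ : u ᵥ* Q₁ ≠ 0 := fun h₀ => hu₀ (hQ₁ u h₀)
  have huQ₃ : u ᵥ* Q₃ ≠ 0 := fun h₀ => hu₀ (hQ₃ u h₀)
  exact hu₀ (hP u (mulVec_eq_zero_of_mul_shear_mul_eq one_ne_zero huQ₃ h₁₃)
    (mulVec_eq_zero_of_mul_shear_mul_eq one_ne_zero huQ₃ h₂₃)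
    (mulVec_eq_zero_of_mul_shear_mul_eq hb huQ₁ h₃₁)
    (mulVec_eq_zero_of_mul_shear_mul_eq hb huQ₁ h₄₁))

theorem rank_inner_blocks_eq_card (h : IsStaircaseRigid P₁ P₂ P₃ P₄ Q₁ Q₂ Q₃)
    [Nonempty ι₁] [Nonempty ι₄] [Fintype κ₁] [Fintype κ₂] [Fintype κ₃]
    (hP : ∀ v, P₁ *ᵥ v = 0 → P₂ *ᵥ v = 0 → P₃ *ᵥ v = 0 → P₄ *ᵥ v = 0 → v = 0)
    (hQ : ∀ u, u ᵥ* Q₁ = 0 → u ᵥ* Q₂ = 0 → u ᵥ* Q₃ = 0 → u = 0) :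
    (P₂ * Q₁).rank = Fintype.card ρ ∧ (P₂ * Q₂).rank = Fintype.card ρ ∧
      (P₃ * Q₂).rank = Fintype.card ρ ∧ (P₃ * Q₃).rank = Fintype.card ρ := by
  have hQ₁ := h.eq_zero_of_vecMul_first_eq_zero hQ
  have hQ₃ := h.reverse.eq_zero_of_vecMul_first_eq_zero fun u h₃ h₂ h₁ => hQ u h₁ h₂ h₃
  have hP₂ := h.eq_zero_of_mulVec_second_eq_zero hP hQ₁ hQ₃
  have hP₃ := h.reverse.eq_zero_of_mulVec_second_eq_zero
    (fun v h₄ h₃ h₂ h₁ => hP v h₁ h₂ h₃ h₄) hQ₃ hQ₁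
  have hQ₂ := h.eq_zero_of_vecMul_second_eq_zero hP hQ₁ hQ₃
  exact ⟨rank_mul_eq_card hP₂ hQ₁, rank_mul_eq_card hP₂ hQ₂, rank_mul_eq_card hP₃ hQ₂,
    rank_mul_eq_card hP₃ hQ₃⟩

end IsStaircaseRigid

end Staircase

section Block43

variable {m1 m2 m3 m4 n1 n2 n3 : ℕ}

theorem block43_inj {F F' : Matrix (Fin m1) (Fin n1) ℝ} {H H' : Matrix (Fin m1) (Fin n2) ℝ}
    {E E' : Matrix (Fin m1) (Fin n3) ℝ} {A A' : Matrix (Fin m2) (Fin n1) ℝ}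
    {G G' : Matrix (Fin m2) (Fin n2) ℝ} {B B' : Matrix (Fin m2) (Fin n3) ℝ}
    {C C' : Matrix (Fin m3) (Fin n1) ℝ} {K K' : Matrix (Fin m3) (Fin n2) ℝ}
    {D D' : Matrix (Fin m3) (Fin n3) ℝ} {J J' : Matrix (Fin m4) (Fin n1) ℝ}
    {I I' : Matrix (Fin m4) (Fin n2) ℝ} {L L' : Matrix (Fin m4) (Fin n3) ℝ} :
    block43 F H E A G B C K D J I L = block43 F' H' E' A' G' B' C' K' D' J' I' L' ↔
      F = F' ∧ H = H' ∧ E = E' ∧ A = A' ∧ G = G' ∧ B = B' ∧ C = C' ∧ K = K' ∧ D = D' ∧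
        J = J' ∧ I = I' ∧ L = L' := by
  simp only [block43, block3, fromRows_ext_iff, fromCols_ext_iff, fromBlocks_inj, and_assoc]
  tauto

theorem block43_mul {ρ : Type*} [Fintype ρ] (P₁ : Matrix (Fin m1) ρ ℝ) (P₂ : Matrix (Fin m2) ρ ℝ)
    (P₃ : Matrix (Fin m3) ρ ℝ) (P₄ : Matrix (Fin m4) ρ ℝ) (Q₁ : Matrix ρ (Fin n1) ℝ)
    (Q₂ : Matrix ρ (Fin n2) ℝ) (Q₃ : Matrix ρ (Fin n3) ℝ) :
    block43 (P₁ * Q₁) (P₁ * Q₂) (P₁ * Q₃) (P₂ * Q₁) (P₂ * Q₂) (P₂ * Q₃) (P₃ * Q₁) (P₃ * Q₂)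
        (P₃ * Q₃) (P₄ * Q₁) (P₄ * Q₂) (P₄ * Q₃) =
      fromRows (fromRows (fromRows P₁ P₂) P₃) P₄ * fromCols (fromCols Q₁ Q₂) Q₃ := by
  ext (((i | i) | i) | i) ((j | j) | j) <;> rfl

variable {r : ℕ}

theorem isStaircaseRigid_of_unique {P₁ : Matrix (Fin m1) (Fin r) ℝ}
    {P₂ : Matrix (Fin m2) (Fin r) ℝ} {P₃ : Matrix (Fin m3) (Fin r) ℝ}
    {P₄ : Matrix (Fin m4) (Fin r) ℝ} {Q₁ : Matrix (Fin r) (Fin n1) ℝ}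
    {Q₂ : Matrix (Fin r) (Fin n2) ℝ} {Q₃ : Matrix (Fin r) (Fin n3) ℝ}
    (hu : ∀ (H' : Matrix (Fin m1) (Fin n2) ℝ) (E' : Matrix (Fin m1) (Fin n3) ℝ)
      (B' : Matrix (Fin m2) (Fin n3) ℝ) (C' : Matrix (Fin m3) (Fin n1) ℝ)
      (J' : Matrix (Fin m4) (Fin n1) ℝ) (I' : Matrix (Fin m4) (Fin n2) ℝ),
      (block43 (P₁ * Q₁) H' E' (P₂ * Q₁) (P₂ * Q₂) B' C' (P₃ * Q₂) (P₃ * Q₃) J' I'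
        (P₄ * Q₃)).rank ≤ r →
      H' = P₁ * Q₂ ∧ E' = P₁ * Q₃ ∧ B' = P₂ * Q₃ ∧ C' = P₃ * Q₁ ∧ J' = P₄ * Q₁ ∧
        I' = P₄ * Q₂) :
    IsStaircaseRigid P₁ P₂ P₃ P₄ Q₁ Q₂ Q₃ := by
  intro P₁' P₂' P₃' P₄' Q₁' Q₂' Q₃' h₁₁ h₂₁ h₂₂ h₃₂ h₃₃ h₄₃
  have hrank := (rank_mul_le_left (fromRows (fromRows (fromRows P₁' P₂') P₃') P₄')
    (fromCols (fromCols Q₁' Q₂') Q₃')).trans (rank_le_card_width _)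
  rw [← block43_mul, h₁₁, h₂₁, h₂₂, h₃₂, h₃₃, h₄₃, Fintype.card_fin] at hrank
  exact hu _ _ _ _ _ _ hrank

theorem block43_eq_of_rank_le {F : Matrix (Fin m1) (Fin n1) ℝ}
    {H H' : Matrix (Fin m1) (Fin n2) ℝ} {E E' : Matrix (Fin m1) (Fin n3) ℝ}
    {A : Matrix (Fin m2) (Fin n1) ℝ} {G : Matrix (Fin m2) (Fin n2) ℝ}
    {B B' : Matrix (Fin m2) (Fin n3) ℝ} {C C' : Matrix (Fin m3) (Fin n1) ℝ}
    {K : Matrix (Fin m3) (Fin n2) ℝ} {D : Matrix (Fin m3) (Fin n3) ℝ}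
    {J J' : Matrix (Fin m4) (Fin n1) ℝ} {I I' : Matrix (Fin m4) (Fin n2) ℝ}
    {L : Matrix (Fin m4) (Fin n3) ℝ}
    (hA : A.rank = r) (hG : G.rank = r) (hK : K.rank = r) (hD : D.rank = r)
    (hM : (block43 F H E A G B C K D J I L).rank ≤ r)
    (hN : (block43 F H' E' A G B' C' K D J' I' L).rank ≤ r) :
    H' = H ∧ E' = E ∧ B' = B ∧ C' = C ∧ J' = J ∧ I' = I := by
  let r₁ : Fin m1 → ((Fin m1 ⊕ Fin m2) ⊕ Fin m3) ⊕ Fin m4 := fun i => .inl (.inl (.inl i))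
  let r₂ : Fin m2 → ((Fin m1 ⊕ Fin m2) ⊕ Fin m3) ⊕ Fin m4 := fun i => .inl (.inl (.inr i))
  let r₃ : Fin m3 → ((Fin m1 ⊕ Fin m2) ⊕ Fin m3) ⊕ Fin m4 := fun i => .inl (.inr i)
  let r₄ : Fin m4 → ((Fin m1 ⊕ Fin m2) ⊕ Fin m3) ⊕ Fin m4 := .inr
  let c₁ : Fin n1 → (Fin n1 ⊕ Fin n2) ⊕ Fin n3 := fun j => .inl (.inl j)
  let c₂ : Fin n2 → (Fin n1 ⊕ Fin n2) ⊕ Fin n3 := fun j => .inl (.inr j)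
  let c₃ : Fin n3 → (Fin n1 ⊕ Fin n2) ⊕ Fin n3 := .inr
  have hH : H' = H := submatrix_eq_of_rank_le_rank_submatrix r₁ r₂ c₁ c₂
    (hN.trans hA.ge) (hM.trans hA.ge) rfl rfl rfl
  have hB : B' = B := submatrix_eq_of_rank_le_rank_submatrix r₂ r₃ c₂ c₃
    (hN.trans hK.ge) (hM.trans hK.ge) rfl rfl rfl
  have hC : C' = C := submatrix_eq_of_rank_le_rank_submatrix r₃ r₂ c₂ c₁
    (hN.trans hG.ge) (hM.trans hG.ge) rfl rfl rfl
  have hI : I' = I := submatrix_eq_of_rank_le_rank_submatrix r₄ r₃ c₃ c₂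
    (hN.trans hD.ge) (hM.trans hD.ge) rfl rfl rfl
  subst B' C'
  have hE : E' = E := submatrix_eq_of_rank_le_rank_submatrix r₁ r₂ c₁ c₃
    (hN.trans hA.ge) (hM.trans hA.ge) rfl rfl rfl
  have hJ : J' = J := submatrix_eq_of_rank_le_rank_submatrix r₄ r₃ c₃ c₁
    (hN.trans hD.ge) (hM.trans hD.ge) rfl rfl rfl
  exact ⟨hH, hE, rfl, rfl, hJ, hI⟩

end Block43

theorem staircase_four_unique_iff_general {m1 m2 m3 m4 n1 n2 n3 r : ℕ}
    (hm1 : 0 < m1) (hm4 : 0 < m4)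
    (F : Matrix (Fin m1) (Fin n1) ℝ) (H : Matrix (Fin m1) (Fin n2) ℝ)
    (E : Matrix (Fin m1) (Fin n3) ℝ)
    (A : Matrix (Fin m2) (Fin n1) ℝ) (G : Matrix (Fin m2) (Fin n2) ℝ)
    (B : Matrix (Fin m2) (Fin n3) ℝ)
    (C : Matrix (Fin m3) (Fin n1) ℝ) (K : Matrix (Fin m3) (Fin n2) ℝ)
    (D : Matrix (Fin m3) (Fin n3) ℝ)
    (J : Matrix (Fin m4) (Fin n1) ℝ) (I : Matrix (Fin m4) (Fin n2) ℝ)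
    (L : Matrix (Fin m4) (Fin n3) ℝ)
    (hM : (block43 F H E A G B C K D J I L).rank = r) :
    (∀ (H' : Matrix (Fin m1) (Fin n2) ℝ) (E' : Matrix (Fin m1) (Fin n3) ℝ)
        (B' : Matrix (Fin m2) (Fin n3) ℝ) (C' : Matrix (Fin m3) (Fin n1) ℝ)
        (J' : Matrix (Fin m4) (Fin n1) ℝ) (I' : Matrix (Fin m4) (Fin n2) ℝ),
        (block43 F H' E' A G B' C' K D J' I' L).rank ≤ r →
          H' = H ∧ E' = E ∧ B' = B ∧ C' = C ∧ J' = J ∧ I' = I) ↔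
      A.rank = r ∧ G.rank = r ∧ K.rank = r ∧ D.rank = r := by
  refine ⟨fun hu => ?_, fun ⟨hA, hG, hK, hD⟩ _ _ _ _ _ _ hN =>
    block43_eq_of_rank_le hA hG hK hD hM.le hN⟩
  obtain ⟨P, Q, hPQ, hP, hQ⟩ := exists_eq_mul_of_rank_eq hM
  obtain ⟨P₁₂₃, P₄, rfl⟩ : ∃ X Y, P = fromRows X Y := ⟨_, _, (fromRows_toRows P).symm⟩
  obtain ⟨P₁₂, P₃, rfl⟩ : ∃ X Y, P₁₂₃ = fromRows X Y := ⟨_, _, (fromRows_toRows _).symm⟩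
  obtain ⟨P₁, P₂, rfl⟩ : ∃ X Y, P₁₂ = fromRows X Y := ⟨_, _, (fromRows_toRows _).symm⟩
  obtain ⟨Q₁₂, Q₃, rfl⟩ : ∃ X Y, Q = fromCols X Y := ⟨_, _, (fromCols_toCols Q).symm⟩
  obtain ⟨Q₁, Q₂, rfl⟩ : ∃ X Y, Q₁₂ = fromCols X Y := ⟨_, _, (fromCols_toCols _).symm⟩
  rw [← block43_mul, block43_inj] at hPQ
  obtain ⟨rfl, rfl, rfl, rfl, rfl, rfl, rfl, rfl, rfl, rfl, rfl, rfl⟩ := hPQ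
  have := Fin.pos_iff_nonempty.1 hm1
  have := Fin.pos_iff_nonempty.1 hm4
  simpa only [Fintype.card_fin] using (isStaircaseRigid_of_unique hu).rank_inner_blocks_eq_card
    (fun v h₁ h₂ h₃ h₄ => hP v (by simp [h₁, h₂, h₃, h₄]))
    (fun u h₁ h₂ h₃ => hQ u (by simp [h₁, h₂, h₃]))

/-- For `M = [[F,H,E],[A,G,B],[C,K,D],[J,I,L]]` of rank `r` with the staircase blocks
`F, A, G, K, D, L` fixed, the completion is unique iff
`rank A = rank G = rank K = rank D = r`. -/
theorem staircase_four_unique_iff {m1 m2 m3 m4 n1 n2 n3 r : ℕ}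
    (hm1 : 0 < m1) (hm2 : 0 < m2) (hm3 : 0 < m3) (hm4 : 0 < m4)
    (hn1 : 0 < n1) (hn2 : 0 < n2) (hn3 : 0 < n3) (hr : 1 ≤ r)
    (F : Matrix (Fin m1) (Fin n1) ℝ) (H : Matrix (Fin m1) (Fin n2) ℝ)
    (E : Matrix (Fin m1) (Fin n3) ℝ)
    (A : Matrix (Fin m2) (Fin n1) ℝ) (G : Matrix (Fin m2) (Fin n2) ℝ)
    (B : Matrix (Fin m2) (Fin n3) ℝ)
    (C : Matrix (Fin m3) (Fin n1) ℝ) (K : Matrix (Fin m3) (Fin n2) ℝ)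
    (D : Matrix (Fin m3) (Fin n3) ℝ)
    (J : Matrix (Fin m4) (Fin n1) ℝ) (I : Matrix (Fin m4) (Fin n2) ℝ)
    (L : Matrix (Fin m4) (Fin n3) ℝ)
    (hM : (block43 F H E A G B C K D J I L).rank = r) :
    (∀ (H' : Matrix (Fin m1) (Fin n2) ℝ) (E' : Matrix (Fin m1) (Fin n3) ℝ)
        (B' : Matrix (Fin m2) (Fin n3) ℝ) (C' : Matrix (Fin m3) (Fin n1) ℝ)
        (J' : Matrix (Fin m4) (Fin n1) ℝ) (I' : Matrix (Fin m4) (Fin n2) ℝ),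
        (block43 F H' E' A G B' C' K D J' I' L).rank ≤ r →
          H' = H ∧ E' = E ∧ B' = B ∧ C' = C ∧ J' = J ∧ I' = I) ↔
      A.rank = r ∧ G.rank = r ∧ K.rank = r ∧ D.rank = r :=
  staircase_four_unique_iff_general hm1 hm4 F H E A G B C K D J I L hM
end

section
/- Let M = [[A, B], [Bᵀ, C]] be a real positive semidefinite matrix of rank r where A, C are square and A, B are fixed. If rank(A) = r, then C is uniquely determined: C = Bᵀ A⁺ B; and every positive semidefinite matrix [[A, B], [Bᵀ, C']] of rank at most r has C' = Bᵀ A⁺ B. -/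
open Matrix

/-- `P` is the Moore–Penrose pseudoinverse of `A` (the four Penrose conditions). -/
def IsMPInv {m n : ℕ} (A : Matrix (Fin m) (Fin n) ℝ) (P : Matrix (Fin n) (Fin m) ℝ) : Prop :=
  A * P * A = A ∧ P * A * P = P ∧ (A * P)ᵀ = A * P ∧ (P * A)ᵀ = P * A

/-!
Let `G` be any generalized inverse of `A`, i.e. `A * G * A = A`. Positive semidefiniteness of
`M = fromBlocks A B Bᴴ D` gives `ker A ⊆ ker Bᴴ`, since `xᴴ M x = 0` forces `M x = 0`; this
yields `Bᴴ * G * A = Bᴴ` and `A * G * B = B`. These two identities make the block factorization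
`M = L * fromBlocks A 0 0 (D - Bᴴ * G * B) * U` with unitriangular `L` and `U` work exactly as
for invertible `A`, so `rank M = rank A + rank (D - Bᴴ * G * B)`. Hence `rank M ≤ rank A` forces
`D = Bᴴ * G * B`.
-/

open Module

open scoped ComplexOrder

theorem Submodule.finrank_prod {R M N : Type*} [DivisionRing R] [AddCommGroup M] [AddCommGroup N]
    [Module R M] [Module R N] (P : Submodule R M) (Q : Submodule R N) [FiniteDimensional R P]
    [FiniteDimensional R Q] :
    finrank R (P.prod Q) = finrank R P + finrank R Q := by
  rw [← Module.finrank_prod, ← LinearMap.finrank_range_of_inj (f := P.subtype.prodMap Q.subtype)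
    (Prod.map_injective.2 ⟨P.injective_subtype, Q.injective_subtype⟩), LinearMap.range_prodMap,
    Submodule.range_subtype, Submodule.range_subtype]

namespace Matrix

section Field

variable {K l m n o : Type*} [Field K]

theorem rank_eq_zero_iff [Fintype m] {A : Matrix l m K} : A.rank = 0 ↔ A = 0 := by
  classical
  rw [rank, Submodule.finrank_eq_zero, LinearMap.range_eq_bot, ← toLin'_apply',
    LinearEquiv.map_eq_zero_iff]

theorem mulVecLin_fromBlocks_zero_zero [Fintype m] [Fintype o] (A : Matrix l m K)
    (D : Matrix n o K) :
    (fromBlocks A 0 0 D).mulVecLin =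
      (LinearEquiv.sumArrowLequivProdArrow l n K K).symm.toLinearMap ∘ₗ
        A.mulVecLin.prodMap D.mulVecLin ∘ₗ
          (LinearEquiv.sumArrowLequivProdArrow m o K K).toLinearMap := by
  ext v (i | i) <;>
    simp [fromBlocks_mulVec, LinearEquiv.sumArrowLequivProdArrow, Equiv.sumArrowEquivProdArrow,
      Function.comp_def]

theorem rank_fromBlocks_zero_zero [Fintype m] [Fintype o] (A : Matrix l m K) (D : Matrix n o K) :
    (fromBlocks A 0 0 D).rank = A.rank + D.rank := by
  rw [rank, mulVecLin_fromBlocks_zero_zero, LinearMap.range_comp, LinearMap.range_comp,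
    LinearEquiv.range, Submodule.map_top, LinearMap.range_prodMap, LinearEquiv.finrank_map_eq,
    Submodule.finrank_prod, rank, rank]

end Field

section GeneralizedSchur

variable {l m n o : Type*} [Fintype l] [Fintype m] [Fintype n] [Fintype o]
  [DecidableEq l] [DecidableEq m] [DecidableEq n] [DecidableEq o]

theorem fromBlocks_eq_mul_fromBlocks_zero_zero_mul {R : Type*} [Ring R] {A : Matrix l m R}
    {B : Matrix l n R} {C : Matrix o m R} (D : Matrix o n R) {G : Matrix m l R}
    (hC : C * G * A = C) (hB : A * G * B = B) :
    fromBlocks A B C D =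
      fromBlocks (1 : Matrix l l R) 0 (C * G) (1 : Matrix o o R) *
        fromBlocks A 0 0 (D - C * G * B) *
          fromBlocks (1 : Matrix m m R) (G * B) 0 (1 : Matrix n n R) := by
  simp only [fromBlocks_multiply, Matrix.mul_one, Matrix.one_mul, Matrix.mul_zero,
    Matrix.zero_mul, add_zero, zero_add, hC, ← Matrix.mul_assoc, hB, add_sub_cancel]

theorem rank_fromBlocks_eq_add_rank_sub {K : Type*} [Field K] {A : Matrix l m K}
    {B : Matrix l n K} {C : Matrix o m K} (D : Matrix o n K) {G : Matrix m l K}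
    (hC : C * G * A = C) (hB : A * G * B = B) :
    (fromBlocks A B C D).rank = A.rank + (D - C * G * B).rank := by
  rw [fromBlocks_eq_mul_fromBlocks_zero_zero_mul D hC hB, rank_mul_eq_left_of_isUnit_det,
    rank_mul_eq_right_of_isUnit_det, rank_fromBlocks_zero_zero] <;> simp

end GeneralizedSchur

namespace PosSemidef

variable {𝕜 m n : Type*} [RCLike 𝕜] [Fintype m] [Fintype n]
  {A : Matrix m m 𝕜} {B : Matrix m n 𝕜} {D : Matrix n n 𝕜}

theorem conjTranspose_mulVec_eq_zero_of_fromBlocks (h : (fromBlocks A B Bᴴ D).PosSemidef)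
    {x : m → 𝕜} (hx : A *ᵥ x = 0) : Bᴴ *ᵥ x = 0 := by
  have hMx : fromBlocks A B Bᴴ D *ᵥ Sum.elim x 0 = Sum.elim (0 : m → 𝕜) (Bᴴ *ᵥ x) := by
    simp [fromBlocks_mulVec, hx]
  have hMx0 := (h.dotProduct_mulVec_zero_iff (Sum.elim x 0)).1
    (by simp [hMx, dotProduct, Fintype.sum_sum_type])
  rw [hMx] at hMx0
  exact funext fun i ↦ congrFun hMx0 (Sum.inr i)

theorem conjTranspose_mul_eq_zero_of_fromBlocks {l : Type*} [Fintype l]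
    (h : (fromBlocks A B Bᴴ D).PosSemidef) {X : Matrix m l 𝕜} (hX : A * X = 0) :
    Bᴴ * X = 0 := by
  refine ext_iff_mulVec.2 fun v ↦ ?_
  rw [← mulVec_mulVec, h.conjTranspose_mulVec_eq_zero_of_fromBlocks, zero_mulVec]
  rw [mulVec_mulVec, hX, zero_mulVec]

variable [DecidableEq m] {G : Matrix m m 𝕜}

theorem conjTranspose_mul_mul_eq_of_fromBlocks (h : (fromBlocks A B Bᴴ D).PosSemidef)
    (hG : A * G * A = A) : Bᴴ * G * A = Bᴴ := by
  have := h.conjTranspose_mul_eq_zero_of_fromBlocks (X := 1 - G * A) (by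
    rw [Matrix.mul_sub, Matrix.mul_one, ← Matrix.mul_assoc, hG, sub_self])
  rwa [Matrix.mul_sub, Matrix.mul_one, sub_eq_zero, eq_comm, ← Matrix.mul_assoc] at this

theorem mul_mul_eq_of_fromBlocks (h : (fromBlocks A B Bᴴ D).PosSemidef)
    (hG : A * G * A = A) : A * G * B = B := by
  have hA : Aᴴ = A := (isHermitian_fromBlocks_iff.1 h.isHermitian).1
  have hB : A * Gᴴ * B = B := by
    simpa [Matrix.mul_assoc, hA] using
      congrArg (·ᴴ) (h.conjTranspose_mul_mul_eq_of_fromBlocks hG)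
  calc A * G * B = A * G * (A * Gᴴ * B) := by rw [hB]
    _ = A * Gᴴ * B := by rw [← Matrix.mul_assoc, ← Matrix.mul_assoc, hG, Matrix.mul_assoc]
    _ = B := hB

variable [DecidableEq n]

theorem rank_fromBlocks (h : (fromBlocks A B Bᴴ D).PosSemidef) (hG : A * G * A = A) :
    (fromBlocks A B Bᴴ D).rank = A.rank + (D - Bᴴ * G * B).rank :=
  rank_fromBlocks_eq_add_rank_sub D (h.conjTranspose_mul_mul_eq_of_fromBlocks hG)
    (h.mul_mul_eq_of_fromBlocks hG)

theorem eq_of_rank_fromBlocks_le (h : (fromBlocks A B Bᴴ D).PosSemidef) (hG : A * G * A = A)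
    (hr : (fromBlocks A B Bᴴ D).rank ≤ A.rank) : D = Bᴴ * G * B := by
  rw [h.rank_fromBlocks hG] at hr
  exact sub_eq_zero.1 (rank_eq_zero_iff.1 (by omega))

end PosSemidef

end Matrix

/-- PSD completion: if `rank A = r = rank M`, then `C = Bᵀ A⁺ B` is uniquely determined. -/
theorem psd_unique_completion_of_rank_eq {p q r : ℕ}
    (A : Matrix (Fin p) (Fin p) ℝ) (B : Matrix (Fin p) (Fin q) ℝ)
    (C : Matrix (Fin q) (Fin q) ℝ)
    (Ap : Matrix (Fin p) (Fin p) ℝ) (hAp : IsMPInv A Ap)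
    (hPSD : (fromBlocks A B Bᵀ C).PosSemidef)
    (hM : (fromBlocks A B Bᵀ C).rank = r) (hA : A.rank = r) :
    C = Bᵀ * Ap * B ∧
      ∀ C' : Matrix (Fin q) (Fin q) ℝ, (fromBlocks A B Bᵀ C').PosSemidef →
        (fromBlocks A B Bᵀ C').rank ≤ r → C' = Bᵀ * Ap * B := by
  have completion_eq (C' : Matrix (Fin q) (Fin q) ℝ) (hC' : (fromBlocks A B Bᵀ C').PosSemidef)
      (hr : (fromBlocks A B Bᵀ C').rank ≤ r) : C' = Bᵀ * Ap * B := by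
    rw [← conjTranspose_eq_transpose_of_trivial] at hC' hr ⊢
    exact hC'.eq_of_rank_fromBlocks_le hAp.1 (hA ▸ hr)
  exact ⟨completion_eq C hPSD hM.le, completion_eq⟩
end
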